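/- arXiv:2208.08371 — 2 statements merged into one kernel-verified Lean document; each statement's English description precedes it below -/
import Mathlib

section
/- Let n = 2x + 1 with x ≥ 2, and let C_n be the cycle with vertices u_1, u_2, …, u_n in cyclic order. Then every set S of vertices of C_n containing at least one vertex of each pair {u_{2i−1}, u_{2i}} for i ∈ {1, …, x} is a distance-2 resolving set of C_n. -/
/-- The `k`-truncated distance: `d_k(x,y) = min{d(x,y), k+1}`. -/
noncomputable def SimpleGraph.distK {V : Type*} (G : SimpleGraph V) (k : ℕ) (x y : V) : ℕ :=
  min (G.dist x y) (k + 1)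

/-- `S` is a distance-`k` resolving set of `G`: every pair of distinct vertices is
resolved by some vertex of `S` with respect to the `k`-truncated distance. -/
def SimpleGraph.IsDistKResolvingSet {V : Type*} (G : SimpleGraph V) (k : ℕ) (S : Set V) : Prop :=
  ∀ x y : V, x ≠ y → ∃ z ∈ S, G.distK k x z ≠ G.distK k y z

/-- The distance-`k` metric dimension of `G`. -/
noncomputable def SimpleGraph.distKDim {V : Type*} (G : SimpleGraph V) (k : ℕ) : ℕ :=
  sInf {m : ℕ | ∃ S : Set V, S.ncard = m ∧ G.IsDistKResolvingSet k S}

/-- `S` is a resolving set of `G`. -/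
def SimpleGraph.IsResolvingSet {V : Type*} (G : SimpleGraph V) (S : Set V) : Prop :=
  ∀ x y : V, x ≠ y → ∃ z ∈ S, G.dist x z ≠ G.dist y z

/-- The metric dimension of `G`. -/
noncomputable def SimpleGraph.metricDim {V : Type*} (G : SimpleGraph V) : ℕ :=
  sInf {m : ℕ | ∃ S : Set V, S.ncard = m ∧ G.IsResolvingSet S}

/-- The cycle `C_n` with vertex set `ZMod n` (vertices `u_0, …, u_{n-1}` in cyclic
order), where consecutive vertices are adjacent. -/
def cycleG (n : ℕ) : SimpleGraph (ZMod n) :=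
  SimpleGraph.fromRel (fun x y => x - y = 1)

/-- The ordered pair `(a, b)` of distinct vertices of `S` determines a gap of `S`:
the arc running forward from `a` to `b` contains no vertex of `S` in its interior.
The internal vertices of this arc are `a + 1, …, a + ((b - a).val - 1)`. -/
def IsGap (n : ℕ) (S : Set (ZMod n)) (a b : ZMod n) : Prop :=
  a ∈ S ∧ b ∈ S ∧ a ≠ b ∧ ∀ i : ℕ, 0 < i → i < (b - a).val → a + (i : ZMod n) ∉ S

/-- The number of (internal) vertices in the gap of `S` determined by `(a, b)`. -/
def gapSize (n : ℕ) (a b : ZMod n) : ℕ := (b - a).val - 1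

open SimpleGraph

lemma zmodOneNeZero {n : ℕ} (hn : 2 ≤ n) : (1 : ZMod n) ≠ 0 := by
  intro h
  have := ZMod.val_cast_of_lt (show 1 < n by omega)
  rw [Nat.cast_one, h] at this
  simp at this

lemma cycleG_adj {n : ℕ} {a b : ZMod n} :
    (cycleG n).Adj a b ↔ a ≠ b ∧ (a - b = 1 ∨ b - a = 1) := by
  simp [cycleG, SimpleGraph.fromRel_adj]

lemma adj_succ {n : ℕ} (hn : 2 ≤ n) (a : ZMod n) : (cycleG n).Adj a (a + 1) := by
  rw [cycleG_adj]
  refine ⟨fun h => zmodOneNeZero hn ?_, Or.inr (by ring)⟩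
  have : a + 1 - a = a - a := by rw [← h]
  simpa using this

lemma walk_forward {n : ℕ} (hn : 2 ≤ n) :
    ∀ (m : ℕ) (a : ZMod n), ∃ w : (cycleG n).Walk a (a + m), w.length = m := by
  intro m
  induction m with
  | zero =>
    intro a
    have he : a + ((0:ℕ) : ZMod n) = a := by push_cast; ring
    rw [he]
    exact ⟨SimpleGraph.Walk.nil, rfl⟩
  | succ m ih =>
    intro a
    obtain ⟨w, hw⟩ := ih (a + 1)
    have he : a + ((m+1 : ℕ) : ZMod n) = (a + 1) + (m : ℕ) := by push_cast; ring
    rw [he]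
    exact ⟨SimpleGraph.Walk.cons (adj_succ hn a) w, by simp [hw]⟩

lemma dist_le_forward {n : ℕ} (hn : 2 ≤ n) (a : ZMod n) (m : ℕ) :
    (cycleG n).dist a (a + m) ≤ m := by
  obtain ⟨w, hw⟩ := walk_forward hn m a
  calc (cycleG n).dist a (a+m) ≤ w.length := SimpleGraph.dist_le w
  _ = m := hw

lemma val_sub_one' {n : ℕ} [NeZero n] {u : ZMod n} (hu : u ≠ 0) : (u - 1).val = u.val - 1 := by
  have h1 : 1 ≤ u.val := Nat.one_le_iff_ne_zero.mpr (by simpa [ZMod.val_eq_zero] using hu)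
  have h2 : u - 1 = ((u.val - 1 : ℕ) : ZMod n) := by
    push_cast [Nat.cast_sub h1]
    rw [ZMod.natCast_val, ZMod.cast_id]
  rw [h2, ZMod.val_cast_of_lt (by have := ZMod.val_lt u; omega)]

lemma val_add_one' {n : ℕ} (hn : 2 ≤ n) {u : ZMod n} (hu : u + 1 ≠ 0) :
    (u + 1).val = u.val + 1 := by
  haveI : NeZero n := ⟨by omega⟩
  have hv : u.val ≠ n - 1 := by
    intro h
    apply hu
    have : u = ((n-1 : ℕ) : ZMod n) := by
      rw [← h, ZMod.natCast_val, ZMod.cast_id]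
    rw [this]
    push_cast [Nat.cast_sub (show 1 ≤ n by omega)]
    simp
  have h1 : (1 : ZMod n).val = 1 := by
    have := ZMod.val_cast_of_lt (show 1 < n by omega)
    rwa [Nat.cast_one] at this
  rw [ZMod.val_add_of_lt (by have := ZMod.val_lt u; omega)]
  omega

lemma key_step {n : ℕ} (hn : 2 ≤ n) (t : ZMod n) :
    min (t+1).val (-(t+1)).val ≤ min t.val (-t).val + 1 := by
  haveI : NeZero n := ⟨by omega⟩
  by_cases ht1 : t + 1 = 0
  · simp [ht1]
  by_cases ht0 : t = 0
  · subst ht0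
    have h1 : (0 + 1 : ZMod n).val = 1 := by
      rw [zero_add]
      have := ZMod.val_cast_of_lt (show 1 < n by omega)
      rwa [Nat.cast_one] at this
    calc min (0+1 : ZMod n).val (-(0+1) : ZMod n).val ≤ (0+1 : ZMod n).val := min_le_left _ _
      _ ≤ min (0 : ZMod n).val (-0 : ZMod n).val + 1 := by
          rw [zero_add] at h1; simp [h1]
  have e1 : (t+1).val = t.val + 1 := val_add_one' hn ht1
  have e2 : (-(t+1)).val = (-t).val - 1 := by
    have : -(t+1) = (-t) - 1 := by ring
    rw [this, val_sub_one' (by simpa using ht0)]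
  have h3 : (-t).val ≠ 0 := by simpa [ZMod.val_eq_zero] using ht0
  omega

lemma key_step' {n : ℕ} (hn : 2 ≤ n) (t : ZMod n) :
    min (t-1).val (-(t-1)).val ≤ min t.val (-t).val + 1 := by
  have := key_step hn (-t)
  have e1 : -t + 1 = -(t-1) := by ring
  have e2 : -(-t+1) = t - 1 := by ring
  rw [e2] at this
  rw [e1] at this
  simp only [neg_neg] at this
  omega

lemma walk_lb {n : ℕ} (hn : 2 ≤ n) {a b : ZMod n} (w : (cycleG n).Walk a b) :
    min (b-a).val (a-b).val ≤ w.length := by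
  induction w with
  | nil => simp
  | @cons a c b h p ih =>
    rw [SimpleGraph.Walk.length_cons]
    rcases (cycleG_adj.mp h).2 with hac | hca
    · -- a - c = 1, i.e. c = a - 1, b - a = (b - c) - 1
      have e1 : b - a = (b - c) - 1 := by rw [← hac]; ring
      have e2 : a - b = -((b-c) - 1) := by rw [← e1]; ring
      rw [e1, e2]
      calc min ((b-c)-1).val (-((b-c)-1)).val ≤ min (b-c).val (-(b-c)).val + 1 :=
            key_step' hn (b - c)
        _ ≤ p.length + 1 := by
            have : -(b-c) = c - b := by ring
            rw [this]; omega
    · have e1 : b - a = (b - c) + 1 := by rw [← hca]; ring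
      have e2 : a - b = -((b-c) + 1) := by rw [← e1]; ring
      rw [e1, e2]
      calc min ((b-c)+1).val (-((b-c)+1)).val ≤ min (b-c).val (-(b-c)).val + 1 :=
            key_step hn (b - c)
        _ ≤ p.length + 1 := by
            have : -(b-c) = c - b := by ring
            rw [this]; omega

lemma cycle_dist {n : ℕ} (hn : 2 ≤ n) (a b : ZMod n) :
    (cycleG n).dist a b = min (b-a).val (a-b).val := by
  haveI : NeZero n := ⟨by omega⟩
  have hb : a + ((b-a).val : ZMod n) = b := by
    rw [ZMod.natCast_val, ZMod.cast_id]; ring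
  have ha : b + ((a-b).val : ZMod n) = a := by
    rw [ZMod.natCast_val, ZMod.cast_id]; ring
  apply le_antisymm
  · apply le_min
    · have := dist_le_forward hn a (b-a).val
      rwa [hb] at this
    · have := dist_le_forward hn b (a-b).val
      rw [ha] at this
      rwa [SimpleGraph.dist_comm] at this
  · obtain ⟨w, hw⟩ := walk_forward hn (b-a).val a
    rw [hb] at w
    have hr : (cycleG n).Reachable a b := ⟨w⟩
    obtain ⟨p, hp⟩ := hr.exists_walk_length_eq_dist
    rw [← hp]
    exact walk_lb hn p

lemma valD (x e : ℕ) (hx : 2 ≤ x) (he : e ≤ 2*x) :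
    min ((e : ZMod (2*x+1))).val ((-(e : ZMod (2*x+1)))).val = min e (2*x+1 - e) := by
  haveI : NeZero (2*x+1) := ⟨by omega⟩
  have h1 : ((e : ZMod (2*x+1))).val = e := ZMod.val_cast_of_lt (by omega)
  rw [ZMod.neg_val, h1]
  by_cases he0 : (e : ZMod (2*x+1)) = 0
  · have he0' : e = 0 := by rw [← h1, he0]; simp
    subst he0'
    simp
  · simp [he0]

lemma cast2x (x : ℕ) : ((2*x : ℕ) : ZMod (2*x+1)) = -1 := by
  have h := ZMod.natCast_self (2*x+1)
  push_cast at h ⊢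
  linear_combination h

lemma zero_once {x : ℕ} (hx : 2 ≤ x) (a : ZMod (2*x+1)) {e f : ℕ}
    (he : e ≤ 2*x) (hf : f ≤ 2*x) (hef : e ≠ f)
    (h1 : a + (e : ZMod (2*x+1)) = 0) (h2 : a + (f : ZMod (2*x+1)) = 0) : False := by
  haveI : NeZero (2*x+1) := ⟨by omega⟩
  have h3 : (e : ZMod (2*x+1)) = f := by linear_combination h1 - h2
  have h4 := congrArg ZMod.val h3
  rw [ZMod.val_cast_of_lt (by omega), ZMod.val_cast_of_lt (by omega)] at h4
  exact hef h4

lemma resolves {x : ℕ} (hx : 2 ≤ x) (a b z : ZMod (2*x+1)) (d e e2 : ℕ)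
    (hd : b - a = (d : ZMod (2*x+1)))
    (hza : z - a = (e : ZMod (2*x+1)))
    (hrel : e = d + e2 ∨ e + (2*x+1) = d + e2)
    (he : e ≤ 2*x) (he2 : e2 ≤ 2*x)
    (hne : ¬ (min (min e (2*x+1-e)) 3 = min (min e2 (2*x+1-e2)) 3)) :
    (cycleG (2*x+1)).distK 2 a z ≠ (cycleG (2*x+1)).distK 2 b z := by
  haveI : NeZero (2*x+1) := ⟨by omega⟩
  have hzb : z - b = (e2 : ZMod (2*x+1)) := by
    have h0 : z - b = (e : ZMod (2*x+1)) - d := by rw [← hza, ← hd]; ring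
    rcases hrel with h | h
    · rw [h0]
      have : ((e : ℕ) : ZMod (2*x+1)) = ((d + e2 : ℕ) : ZMod (2*x+1)) := by rw [h]
      push_cast at this
      linear_combination this
    · rw [h0]
      have h5 : ((e:ℕ) : ZMod (2*x+1)) + ((2*x+1 : ℕ) : ZMod (2*x+1))
          = ((d:ℕ) : ZMod (2*x+1)) + ((e2:ℕ) : ZMod (2*x+1)) := by
        rw [← Nat.cast_add, ← Nat.cast_add, h]
      rw [ZMod.natCast_self, add_zero] at h5
      linear_combination h5
  have haz : a - z = -(e : ZMod (2*x+1)) := by rw [← hza]; ring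
  have hbz : b - z = -(e2 : ZMod (2*x+1)) := by rw [← hzb]; ring
  simp only [SimpleGraph.distK]
  rw [cycle_dist (by omega), cycle_dist (by omega), hza, haz, hzb, hbz,
    valD x e hx he, valD x e2 hx he2]
  simpa using hne

lemma hit_run {x : ℕ} (hx : 2 ≤ x) (S : Set (ZMod (2*x+1)))
    (hS : ∀ i : ℕ, 1 ≤ i → i ≤ x →
      ((2 * i - 1 : ℕ) : ZMod (2 * x + 1)) ∈ S ∨ ((2 * i : ℕ) : ZMod (2 * x + 1)) ∈ S)
    (c : ZMod (2*x+1)) (h0 : c ≠ 0) (h1 : c + 1 ≠ 0) (h2 : c + 1 + 1 ≠ 0) :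
    ∃ z ∈ S, z = c ∨ z = c + 1 ∨ z = c + 1 + 1 := by
  haveI : NeZero (2*x+1) := ⟨by omega⟩
  set j := c.val with hjdef
  have hc : ((j : ℕ) : ZMod (2*x+1)) = c := by rw [hjdef, ZMod.natCast_val, ZMod.cast_id]
  have hj1 : 1 ≤ j := Nat.one_le_iff_ne_zero.mpr (by simpa [hjdef, ZMod.val_eq_zero] using h0)
  have hjn : j < 2*x+1 := ZMod.val_lt c
  have hj2 : j ≠ 2*x := by
    intro h
    apply h1
    have : ((j + 1 : ℕ) : ZMod (2*x+1)) = 0 := by rw [h]; exact_mod_cast ZMod.natCast_self _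
    push_cast at this
    rw [hc] at this
    exact this
  have hj3 : j ≠ 2*x - 1 := by
    intro h
    apply h2
    have : ((j + 1 + 1 : ℕ) : ZMod (2*x+1)) = 0 := by
      rw [h, show 2*x-1+1+1 = 2*x+1 by omega]; exact ZMod.natCast_self _
    push_cast at this
    rw [hc] at this
    exact this
  rcases Nat.even_or_odd j with hpar | hpar
  · -- j even, use pair (j+1, j+2)
    obtain ⟨k, hk⟩ := hpar
    have hi1 : 1 ≤ k + 1 := by omega
    have hi2 : k + 1 ≤ x := by omega
    rcases hS (k+1) hi1 hi2 with hm | hm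
    · refine ⟨_, hm, Or.inr (Or.inl ?_)⟩
      rw [show 2*(k+1)-1 = j + 1 by omega]
      push_cast
      rw [hc]
    · refine ⟨_, hm, Or.inr (Or.inr ?_)⟩
      rw [show 2*(k+1) = j + 1 + 1 by omega]
      push_cast
      rw [hc]
  · -- j odd, use pair (j, j+1)
    obtain ⟨k, hk⟩ := hpar
    have hi1 : 1 ≤ k + 1 := by omega
    have hi2 : k + 1 ≤ x := by omega
    rcases hS (k+1) hi1 hi2 with hm | hm
    · refine ⟨_, hm, Or.inl ?_⟩
      rw [show 2*(k+1)-1 = j by omega, hc]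
    · refine ⟨_, hm, Or.inr (Or.inl ?_)⟩
      rw [show 2*(k+1) = j + 1 by omega]
      push_cast
      rw [hc]

lemma key_lemma {x : ℕ} (hx : 3 ≤ x) (S : Set (ZMod (2*x+1)))
    (hS : ∀ i : ℕ, 1 ≤ i → i ≤ x →
      ((2 * i - 1 : ℕ) : ZMod (2 * x + 1)) ∈ S ∨ ((2 * i : ℕ) : ZMod (2 * x + 1)) ∈ S)
    (a b : ZMod (2*x+1)) (h1 : 1 ≤ (b-a).val) (hdx : (b-a).val ≤ x) :
    ∃ z ∈ S, (cycleG (2*x+1)).distK 2 a z ≠ (cycleG (2*x+1)).distK 2 b z := by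
  haveI : NeZero (2*x+1) := ⟨by omega⟩
  have hx2 : (2:ℕ) ≤ x := by omega
  obtain ⟨d, hdb, h1', hdx'⟩ : ∃ d : ℕ, b - a = (d : ZMod (2*x+1)) ∧ 1 ≤ d ∧ d ≤ x :=
    ⟨(b-a).val, by rw [ZMod.natCast_val, ZMod.cast_id], h1, hdx⟩
  clear h1 hdx
  by_cases hd3 : 3 ≤ d
  · -- runs {a-1, a, a+1} and {a+(d-1), a+d, a+(d+1)}
    have run2 : ∀ e0 : ℕ, e0 ≤ 2*x → (e0 = 0 ∨ e0 = 1 ∨ e0 = 2*x) →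
        a + (e0 : ZMod (2*x+1)) = 0 →
        ∃ z ∈ S, (cycleG (2*x+1)).distK 2 a z ≠ (cycleG (2*x+1)).distK 2 b z := by
      intro e0 he0 he0m hz0
      have hno : ∀ f : ℕ, f ≤ 2*x → f ≠ e0 → a + (f : ZMod (2*x+1)) ≠ 0 := by
        intro f hf hfe hcon
        exact zero_once hx2 a hf he0 hfe hcon hz0
      have hc1 : a + ((d-1 : ℕ) : ZMod (2*x+1)) + 1 = a + ((d : ℕ) : ZMod (2*x+1)) := by
        have h9 : ((d-1:ℕ) : ZMod (2*x+1)) + 1 = ((d-1+1 : ℕ) : ZMod (2*x+1)) := by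
          push_cast; ring
        rw [add_assoc, h9, show d-1+1 = d from by omega]
      have hc2 : a + ((d-1 : ℕ) : ZMod (2*x+1)) + 1 + 1 = a + ((d+1 : ℕ) : ZMod (2*x+1)) := by
        have h9 : ((d-1:ℕ) : ZMod (2*x+1)) + 1 + 1 = ((d-1+1+1 : ℕ) : ZMod (2*x+1)) := by
          push_cast; ring
        rw [add_assoc, add_assoc, ← add_assoc ((d-1:ℕ) : ZMod (2*x+1)), h9,
          show d-1+1+1 = d+1 from by omega]
      obtain ⟨z, hzS, hz⟩ := hit_run hx2 S hS (a + ((d-1 : ℕ) : ZMod (2*x+1)))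
        (hno (d-1) (by omega) (by rcases he0m with rfl|rfl|rfl <;> omega))
        (by rw [hc1]; exact hno d (by omega) (by rcases he0m with rfl|rfl|rfl <;> omega))
        (by rw [hc2]; exact hno (d+1) (by omega) (by rcases he0m with rfl|rfl|rfl <;> omega))
      refine ⟨z, hzS, ?_⟩
      rcases hz with rfl | rfl | rfl
      · exact resolves hx2 a b _ d (d-1) (2*x) hdb (by ring) (Or.inr (by omega))
          (by omega) (by omega) (by omega)
      · exact resolves hx2 a b _ d d 0 hdb (by rw [hc1]; ring) (Or.inl (by omega))
          (by omega) (by omega) (by omega)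
      · exact resolves hx2 a b _ d (d+1) 1 hdb (by rw [hc2]; ring) (Or.inl (by omega))
          (by omega) (by omega) (by omega)
    by_cases hA : a - 1 = 0
    · exact run2 (2*x) (by omega) (by omega) (by rw [cast2x]; linear_combination hA)
    by_cases hB : a = 0
    · exact run2 0 (by omega) (by omega) (by simpa using hB)
    by_cases hC : a + 1 = 0
    · exact run2 1 (by omega) (by omega) (by simpa using hC)
    · obtain ⟨z, hzS, hz⟩ := hit_run hx2 S hS (a - 1) hA
        (by rw [sub_add_cancel]; exact hB) (by rw [sub_add_cancel]; exact hC)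
      refine ⟨z, hzS, ?_⟩
      rcases hz with rfl | rfl | rfl
      · exact resolves hx2 a b _ d (2*x) (2*x-d) hdb (by rw [cast2x]; ring)
          (Or.inl (by omega)) (by omega) (by omega) (by omega)
      · exact resolves hx2 a b _ d 0 (2*x+1-d) hdb (by push_cast; ring)
          (Or.inr (by omega)) (by omega) (by omega) (by omega)
      · exact resolves hx2 a b _ d 1 (2*x+2-d) hdb (by push_cast; ring)
          (Or.inr (by omega)) (by omega) (by omega) (by omega)
  · -- d ≤ 2; runs {a-2, a-1, a} and {b, b+1, b+2}
    have hb : b = a + ((d : ℕ) : ZMod (2*x+1)) := by linear_combination hdb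
    have hc1 : b + 1 = a + ((d+1 : ℕ) : ZMod (2*x+1)) := by rw [hb]; push_cast; ring
    have hc2 : b + 1 + 1 = a + ((d+2 : ℕ) : ZMod (2*x+1)) := by rw [hb]; push_cast; ring
    have run1 : ∀ e0 : ℕ, e0 ≤ 2*x → (e0 = d ∨ e0 = d+1 ∨ e0 = d+2) →
        a + (e0 : ZMod (2*x+1)) = 0 →
        ∃ z ∈ S, (cycleG (2*x+1)).distK 2 a z ≠ (cycleG (2*x+1)).distK 2 b z := by
      intro e0 he0 he0m hz0
      have hno : ∀ f : ℕ, f ≤ 2*x → f ≠ e0 → a + (f : ZMod (2*x+1)) ≠ 0 := by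
        intro f hf hfe hcon
        exact zero_once hx2 a hf he0 hfe hcon hz0
      have hd1 : a + ((2*x-1 : ℕ) : ZMod (2*x+1)) + 1 = a + ((2*x : ℕ) : ZMod (2*x+1)) := by
        have h9 : ((2*x-1:ℕ) : ZMod (2*x+1)) + 1 = ((2*x-1+1 : ℕ) : ZMod (2*x+1)) := by
          push_cast; ring
        rw [add_assoc, h9, show 2*x-1+1 = 2*x from by omega]
      have hd2 : a + ((2*x-1 : ℕ) : ZMod (2*x+1)) + 1 + 1 = a + ((0 : ℕ) : ZMod (2*x+1)) := by
        rw [hd1, cast2x]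
        push_cast
        ring
      obtain ⟨z, hzS, hz⟩ := hit_run hx2 S hS (a + ((2*x-1 : ℕ) : ZMod (2*x+1)))
        (hno (2*x-1) (by omega) (by rcases he0m with rfl|rfl|rfl <;> omega))
        (by rw [hd1]; exact hno (2*x) (by omega) (by rcases he0m with rfl|rfl|rfl <;> omega))
        (by rw [hd2]; exact hno 0 (by omega) (by rcases he0m with rfl|rfl|rfl <;> omega))
      refine ⟨z, hzS, ?_⟩
      rcases hz with rfl | rfl | rfl
      · exact resolves hx2 a b _ d (2*x-1) (2*x-1-d) hdb (by ring) (Or.inl (by omega))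
          (by omega) (by omega) (by omega)
      · exact resolves hx2 a b _ d (2*x) (2*x-d) hdb (by rw [hd1]; ring) (Or.inl (by omega))
          (by omega) (by omega) (by omega)
      · exact resolves hx2 a b _ d 0 (2*x+1-d) hdb (by rw [hd2]; ring) (Or.inr (by omega))
          (by omega) (by omega) (by omega)
    by_cases hA : b = 0
    · exact run1 d (by omega) (by omega) (by rw [← hb]; exact hA)
    by_cases hB : b + 1 = 0
    · exact run1 (d+1) (by omega) (by omega) (by rw [← hc1]; exact hB)
    by_cases hC : b + 1 + 1 = 0
    · exact run1 (d+2) (by omega) (by omega) (by rw [← hc2]; exact hC)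
    · obtain ⟨z, hzS, hz⟩ := hit_run hx2 S hS b hA hB hC
      refine ⟨z, hzS, ?_⟩
      rcases hz with hzeq | hzeq | hzeq <;> rw [hzeq]
      · exact resolves hx2 a b b d d 0 hdb hdb (Or.inl (by omega))
          (by omega) (by omega) (by omega)
      · exact resolves hx2 a b (b+1) d (d+1) 1 hdb (by rw [hc1]; ring) (Or.inl (by omega))
          (by omega) (by omega) (by omega)
      · exact resolves hx2 a b (b+1+1) d (d+2) 2 hdb (by rw [hc2]; ring) (Or.inl (by omega))
          (by omega) (by omega) (by omega)

set_option maxRecDepth 10000 in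
lemma five : ∀ a b z1 z2 : ZMod (2*2+1), a ≠ b → (z1 = 1 ∨ z1 = 2) → (z2 = 3 ∨ z2 = 4) →
    (min (min (z1-a).val (a-z1).val) 3 ≠ min (min (z1-b).val (b-z1).val) 3) ∨
    (min (min (z2-a).val (a-z2).val) 3 ≠ min (min (z2-b).val (b-z2).val) 3) := by decide


/-- for the odd cycle `C_{2x+1}` (`x ≥ 2`), whose vertices are
`u_1, …, u_n` in cyclic order (here `u_j` is `(j : ZMod n)`), any set containing at
least one vertex of each pair `{u_{2i-1}, u_{2i}}`, `1 ≤ i ≤ x`, is a distance-2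
resolving set. -/
theorem stmt_17 (x : ℕ) (hx : 2 ≤ x) (S : Set (ZMod (2 * x + 1)))
    (hS : ∀ i : ℕ, 1 ≤ i → i ≤ x →
      ((2 * i - 1 : ℕ) : ZMod (2 * x + 1)) ∈ S ∨ ((2 * i : ℕ) : ZMod (2 * x + 1)) ∈ S) :
    (cycleG (2 * x + 1)).IsDistKResolvingSet 2 S := by
  intro a b hab
  haveI : NeZero (2*x+1) := ⟨by omega⟩
  by_cases hx2 : x = 2
  · subst hx2
    obtain ⟨z1, hz1S, hz1⟩ : ∃ z1 ∈ S, z1 = 1 ∨ z1 = 2 := by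
      rcases hS 1 le_rfl (by omega) with h | h
      · exact ⟨_, h, Or.inl (by decide)⟩
      · exact ⟨_, h, Or.inr (by decide)⟩
    obtain ⟨z2, hz2S, hz2⟩ : ∃ z2 ∈ S, z2 = 3 ∨ z2 = 4 := by
      rcases hS 2 (by omega) le_rfl with h | h
      · exact ⟨_, h, Or.inl (by decide)⟩
      · exact ⟨_, h, Or.inr (by decide)⟩
    rcases five a b z1 z2 hab hz1 hz2 with h | h
    · refine ⟨z1, hz1S, ?_⟩
      simp only [SimpleGraph.distK]
      rw [cycle_dist (by omega), cycle_dist (by omega)]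
      simpa using h
    · refine ⟨z2, hz2S, ?_⟩
      simp only [SimpleGraph.distK]
      rw [cycle_dist (by omega), cycle_dist (by omega)]
      simpa using h
  · have hx3 : 3 ≤ x := by omega
    have hne : b - a ≠ 0 := sub_ne_zero.mpr (Ne.symm hab)
    have h1 : 1 ≤ (b - a).val := Nat.one_le_iff_ne_zero.mpr (by simpa [ZMod.val_eq_zero] using hne)
    have hvlt : (b - a).val < 2*x+1 := ZMod.val_lt _
    rcases le_or_gt ((b - a).val) x with h | h
    · exact key_lemma hx3 S hS a b h1 h
    · have hba : (a - b).val = 2*x+1 - (b - a).val := by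
        have hemph : a - b = -(b - a) := by ring
        rw [hemph, ZMod.neg_val]
        simp [hne]
      have h1' : 1 ≤ (a - b).val := by omega
      have h2' : (a - b).val ≤ x := by omega
      obtain ⟨z, hzS, hzr⟩ := key_lemma hx3 S hS b a h1' h2'
      exact ⟨z, hzS, hzr.symm⟩
end

section
/- Let T be a tree that is not a path such that no vertex of T has degree 2 and every vertex of degree at least 3 is adjacent to at least one leaf. Suppose further that every vertex of degree at least 3 is adjacent to at most two leaves. Let x be the number of vertices of degree at least 3 adjacent to exactly one leaf and let z be the number of vertices of degree at least 3 adjacent to exactly two leaves, and suppose z ≥ 2. Then dim_1(T) ≥ 2z + x − 1. -/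
/-- A leaf: a vertex of degree one. -/
def IsLeafVx {V : Type*} (G : SimpleGraph V) (u : V) : Prop :=
  (G.neighborSet u).ncard = 1

/-- The set of leaf neighbors of a vertex. -/
def leafNbrs {V : Type*} (G : SimpleGraph V) (v : V) : Set V :=
  {u ∈ G.neighborSet v | IsLeafVx G u}

/-!
A leaf `u` with support `v` is at truncated distance `2` from every vertex other than `u` and `v`,
so a distance-`1` resolving set must contain a vertex of `{u, v, u', v'}` for any two leaves
`u, u'` with supports `v, v'`, and a vertex of `{u, u'}` if `v = v'`. Hence among the `2z + x`
leaves hanging at the vertices of degree at least `3`, at most one has neither itself nor its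
support in the resolving set, and sending each other leaf to itself if it is in the set and to
its support otherwise is injective.
-/

section Leaves

variable {V : Type*} {G : SimpleGraph V} {u v w : V}

lemma IsLeafVx.eq_of_adj (hu : IsLeafVx G u) (hv : G.Adj u v) (hw : G.Adj u w) : v = w := by
  obtain ⟨a, ha⟩ := Set.ncard_eq_one.mp hu
  have hv' : v ∈ G.neighborSet u := hv
  have hw' : w ∈ G.neighborSet u := hw
  rw [ha] at hv' hw'
  exact hv'.trans hw'.symm

lemma disjoint_leafNbrs (hne : v ≠ w) : Disjoint (leafNbrs G v) (leafNbrs G w) :=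
  Set.disjoint_left.mpr fun _ ⟨hv, hu⟩ ⟨hw, _⟩ ↦
    hne (hu.eq_of_adj (G.adj_symm hv) (G.adj_symm hw))

lemma ncard_biUnion_leafNbrs [Finite V] (W : Finset V) :
    (⋃ v ∈ W, leafNbrs G v).ncard = ∑ v ∈ W, (leafNbrs G v).ncard := by
  rw [← finsum_mem_coe_finset, ← W.finite_toSet.ncard_biUnion (fun _ _ ↦ Set.toFinite _)
    fun _ _ _ _ ↦ disjoint_leafNbrs]
  rfl

lemma not_adj_of_mem_leafNbrs (hu : u ∈ leafNbrs G v) (hv : ¬ IsLeafVx G v) (hw : IsLeafVx G w) :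
    ¬ G.Adj u w := fun huw ↦ hv (hu.2.eq_of_adj (G.adj_symm hu.1) huw ▸ hw)

end Leaves

namespace SimpleGraph

variable {V : Type*} {G : SimpleGraph V} {k : ℕ} {u v w : V}

lemma distK_self (k : ℕ) (u : V) : G.distK k u u = 0 := by
  simp [distK]

lemma distK_of_adj (h : G.Adj u v) : G.distK k u v = 1 := by
  simp [distK, dist_eq_one_iff_adj.mpr h]

lemma Connected.distK_ne_zero (hc : G.Connected) (h : u ≠ v) : G.distK k u v ≠ 0 := by
  have := hc.pos_dist_of_ne h
  simp only [distK]
  omega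

lemma Connected.dist_eq_dist_add_one_of_neighborSet_eq (hc : G.Connected)
    (hu : G.neighborSet u = {v}) (hw : w ≠ u) : G.dist u w = G.dist v w + 1 := by
  have hadj : G.Adj u v := by simp [← mem_neighborSet, hu]
  have hle : G.dist u w ≤ G.dist v w + 1 := by
    simpa [dist_eq_one_iff_adj.mpr hadj, add_comm] using hc.dist_triangle (u := u) (v := v) (w := w)
  obtain ⟨p, hp⟩ := hc.exists_walk_length_eq_dist u w
  cases p with
  | nil => exact absurd rfl hw
  | @cons _ b _ hub q =>
    have hb : b = v := by simpa [← mem_neighborSet, hu] using hub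
    subst hb
    have := dist_le q
    simp only [Walk.length_cons] at hp
    omega

lemma Connected.distK_one_of_neighborSet_eq (hc : G.Connected) (hu : G.neighborSet u = {v})
    (hwu : w ≠ u) (hwv : w ≠ v) : G.distK 1 u w = 2 := by
  have h₁ := hc.dist_eq_dist_add_one_of_neighborSet_eq hu hwu
  have h₂ := hc.pos_dist_of_ne hwv.symm
  simp only [distK]
  omega

lemma Connected.mem_of_distK_one_ne {u' v' : V} (hc : G.Connected)
    (hu : G.neighborSet u = {v}) (hu' : G.neighborSet u' = {v'})
    (h : G.distK 1 u w ≠ G.distK 1 u' w) : w = u ∨ w = v ∨ w = u' ∨ w = v' := by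
  by_contra! hw
  exact h <| (hc.distK_one_of_neighborSet_eq hu hw.1 hw.2.1).trans
    (hc.distK_one_of_neighborSet_eq hu' hw.2.2.1 hw.2.2.2).symm

lemma isDistKResolvingSet_univ (hc : G.Connected) : G.IsDistKResolvingSet k Set.univ :=
  fun x _ hxy ↦ ⟨x, trivial, by rw [distK_self]; exact (hc.distK_ne_zero hxy.symm).symm⟩

namespace IsDistKResolvingSet

variable {S : Set V} {u' v' : V}

lemma eq_of_neighborSet_eq (hS : G.IsDistKResolvingSet 1 S) (hc : G.Connected)
    (hu : G.neighborSet u = {v}) (hu' : G.neighborSet u' = {v'})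
    (huS : u ∉ S) (hvS : v ∉ S) (hu'S : u' ∉ S) (hv'S : v' ∉ S) : u = u' := by
  by_contra hne
  obtain ⟨w, hwS, hw⟩ := hS u u' hne
  rcases hc.mem_of_distK_one_ne hu hu' hw with rfl | rfl | rfl | rfl <;> contradiction

lemma eq_of_neighborSet_eq_of_eq (hS : G.IsDistKResolvingSet 1 S) (hc : G.Connected)
    (hu : G.neighborSet u = {v}) (hu' : G.neighborSet u' = {v})
    (huS : u ∉ S) (hu'S : u' ∉ S) : u = u' := by
  by_contra hne
  obtain ⟨w, hwS, hw⟩ := hS u u' hne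
  have hv : G.distK 1 u v = G.distK 1 u' v := by
    rw [distK_of_adj (by simp [← mem_neighborSet, hu]),
      distK_of_adj (by simp [← mem_neighborSet, hu'])]
  rcases hc.mem_of_distK_one_ne hu hu' hw with rfl | rfl | rfl | rfl <;> contradiction

lemma ncard_le_ncard_add_one_of_isLeafVx (hS : G.IsDistKResolvingSet 1 S) (hc : G.Connected)
    (hSf : S.Finite) {L : Set V} (hL : ∀ u ∈ L, IsLeafVx G u)
    (hLadj : ∀ u ∈ L, ∀ w ∈ L, ¬ G.Adj u w) : L.ncard ≤ S.ncard + 1 := by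
  classical
  choose! s hs using fun u hu ↦ Set.ncard_eq_one.mp (hL u hu)
  have hadj : ∀ u ∈ L, G.Adj u (s u) := fun u hu ↦ by simp [← mem_neighborSet, hs u hu]
  set good := {u ∈ L | u ∈ S ∨ s u ∈ S}
  set bad := {u ∈ L | u ∉ S ∧ s u ∉ S}
  have hbad : bad.ncard ≤ 1 := by
    have hsub : bad.Subsingleton := fun a ha b hb ↦
      hS.eq_of_neighborSet_eq hc (hs a ha.1) (hs b hb.1) ha.2.1 ha.2.2 hb.2.1 hb.2.2
    have := hsub.finite.to_subtype
    exact Set.ncard_le_one_iff_subsingleton.mpr hsub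
  have hgood : good.ncard ≤ S.ncard := by
    refine Set.ncard_le_ncard_of_injOn (fun u ↦ if u ∈ S then u else s u) ?_ ?_ hSf
    · rintro u ⟨-, hu⟩
      split_ifs with h
      exacts [h, hu.resolve_left h]
    · rintro a ⟨haL, -⟩ b ⟨hbL, -⟩ hab
      by_cases ha : a ∈ S <;> by_cases hb : b ∈ S <;> simp only [ha, hb, if_true, if_false] at hab
      · exact hab
      · exact absurd (hab ▸ hadj b hbL) (hLadj b hbL a haL)
      · exact absurd (hab ▸ hadj a haL) (hLadj a haL b hbL)
      · exact hS.eq_of_neighborSet_eq_of_eq hc (hs a haL) (hab ▸ hs b hbL) ha hb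
  have hL : L = good ∪ bad := by
    ext u
    simp only [good, bad, Set.mem_union, Set.mem_ofPred_eq]
    tauto
  calc L.ncard ≤ good.ncard + bad.ncard := hL ▸ Set.ncard_union_le good bad
    _ ≤ S.ncard + 1 := by omega

lemma ncard_biUnion_leafNbrs_le (hS : G.IsDistKResolvingSet 1 S) (hc : G.Connected)
    (hSf : S.Finite) {W : Finset V} (hW : ∀ v ∈ W, ¬ IsLeafVx G v) :
    (⋃ v ∈ W, leafNbrs G v).ncard ≤ S.ncard + 1 := by
  refine hS.ncard_le_ncard_add_one_of_isLeafVx hc hSf ?_ ?_ <;> simp only [Set.mem_iUnion]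
  · exact fun u ⟨_, _, hu⟩ ↦ hu.2
  · exact fun u ⟨v, hv, hu⟩ w ⟨_, _, hw⟩ ↦ not_adj_of_mem_leafNbrs hu (hW v hv) hw.2

end IsDistKResolvingSet

lemma le_distKDim (hc : G.Connected) {n : ℕ}
    (h : ∀ S, G.IsDistKResolvingSet k S → n ≤ S.ncard) : n ≤ G.distKDim k :=
  le_csInf ⟨_, Set.univ, rfl, isDistKResolvingSet_univ hc⟩ fun _ ⟨S, hS, hres⟩ ↦ hS ▸ h S hres

end SimpleGraph

theorem stmt_19_general {V : Type*} [Fintype V] (G : SimpleGraph V)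
    (hT : G.IsTree)
    (x z : ℕ)
    (hx : x = {v : V | 3 ≤ (G.neighborSet v).ncard ∧ (leafNbrs G v).ncard = 1}.ncard)
    (hz : z = {v : V | 3 ≤ (G.neighborSet v).ncard ∧ (leafNbrs G v).ncard = 2}.ncard) :
    2 * z + x - 1 ≤ G.distKDim 1 := by
  classical
  set A := Finset.univ.filter fun v ↦ 3 ≤ (G.neighborSet v).ncard ∧ (leafNbrs G v).ncard = 2
  set B := Finset.univ.filter fun v ↦ 3 ≤ (G.neighborSet v).ncard ∧ (leafNbrs G v).ncard = 1
  have hA : z = A.card := by rw [hz, Set.ncard_eq_toFinset_card', Set.toFinset_ofPred]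
  have hB : x = B.card := by rw [hx, Set.ncard_eq_toFinset_card', Set.toFinset_ofPred]
  have hAB : ∀ v ∈ A ∪ B, ¬ IsLeafVx G v := by
    intro v hv hleaf
    simp only [A, B, Finset.mem_union, Finset.mem_filter, IsLeafVx] at hv hleaf
    omega
  have hL : (⋃ v ∈ A ∪ B, leafNbrs G v).ncard = 2 * z + x := by
    have hsumA : ∑ v ∈ A, (leafNbrs G v).ncard = ∑ _v ∈ A, 2 :=
      Finset.sum_congr rfl fun _ hv ↦ (Finset.mem_filter.mp hv).2.2
    have hsumB : ∑ v ∈ B, (leafNbrs G v).ncard = ∑ _v ∈ B, 1 :=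
      Finset.sum_congr rfl fun _ hv ↦ (Finset.mem_filter.mp hv).2.2
    rw [ncard_biUnion_leafNbrs, Finset.sum_union (Finset.disjoint_filter.mpr fun _ _ ↦ by omega),
      hsumA, hsumB]
    simp [hA, hB, mul_comm]
  refine SimpleGraph.le_distKDim hT.connected fun S hS ↦ ?_
  have := hS.ncard_biUnion_leafNbrs_le hT.connected S.toFinite hAB
  omega

/-- let `T` be a tree that is not a path, with no vertex of degree 2, in
which every vertex of degree at least 3 is adjacent to at least one and at most two
leaves. If `x` vertices of degree at least 3 are adjacent to exactly one leaf, `z`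
vertices of degree at least 3 are adjacent to exactly two leaves, and `z ≥ 2`, then
`dim_1(T) ≥ 2z + x - 1`. -/
theorem stmt_19 {V : Type*} [Fintype V] (G : SimpleGraph V)
    (hT : G.IsTree)
    (hnp : ¬ ∃ n : ℕ, Nonempty (G ≃g SimpleGraph.pathGraph n))
    (hdeg2 : ∀ v : V, (G.neighborSet v).ncard ≠ 2)
    (hleaf : ∀ v : V, 3 ≤ (G.neighborSet v).ncard →
      1 ≤ (leafNbrs G v).ncard ∧ (leafNbrs G v).ncard ≤ 2)
    (x z : ℕ)
    (hx : x = {v : V | 3 ≤ (G.neighborSet v).ncard ∧ (leafNbrs G v).ncard = 1}.ncard)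
    (hz : z = {v : V | 3 ≤ (G.neighborSet v).ncard ∧ (leafNbrs G v).ncard = 2}.ncard)
    (hz2 : 2 ≤ z) :
    2 * z + x - 1 ≤ G.distKDim 1 :=
  stmt_19_general G hT x z hx hz
end
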